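/- For a > 0 and integer n ≥ 2, the function μ ↦ (a + n(μ − m)²)^(−n/2) is integrable over ℝ, and after normalization it is the density of a location-scale t-distribution with n − 1 degrees of freedom, location m, and scale a/(n(n−1)). In contrast, for n = 1 the function μ ↦ (a + (μ − m)²)^(−1/2) is not integrable over ℝ. -/

import Mathlib

/-! After rescaling, the kernel is a constant multiple of `(1 + (μ - m)² / k) ^ (-n/2)` with
`k = a / n`, a translated and dilated power of the Japanese bracket `(1 + y²) ^ (-n/2)`, which is
integrable on `ℝ` exactly when `n > 1`. For `n = 1` the kernel decays only like `1 / |μ|`, and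
`1 / μ` is not integrable at infinity. -/

open MeasureTheory

theorem add_mul_sq_rpow_eq {a b : ℝ} (ha : 0 < a) (hb : 0 < b) (x p : ℝ) :
    (a + b * x ^ 2) ^ p = a ^ p * (1 + x ^ 2 / (a / b)) ^ p := by
  have hbase : 1 + x ^ 2 / (a / b) = (a + b * x ^ 2) / a := by field_simp
  rw [hbase, Real.div_rpow (by positivity) ha.le, mul_div_cancel₀ _ (Real.rpow_pos_of_pos ha p).ne']

theorem integrable_one_add_sq_div_rpow (m : ℝ) {k r : ℝ} (hk : 0 < k) (hr : 1 < r) :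
    Integrable (fun x : ℝ => (1 + (x - m) ^ 2 / k) ^ (-r / 2)) := by
  have hstd : Integrable (fun y : ℝ => (1 + ‖y‖ ^ 2) ^ (-r / 2)) :=
    integrable_rpow_neg_one_add_norm_sq (by simpa using hr)
  convert (hstd.comp_div (Real.sqrt_pos.2 hk).ne').comp_sub_right m using 3 with x
  rw [Real.norm_eq_abs, sq_abs, div_pow, Real.sq_sqrt hk.le]

theorem inv_le_sqrt_two_mul_add_sq_rpow {a x : ℝ} (hx : 0 < x) (hax : |a| < x ^ 2) :
    x⁻¹ ≤ √2 * (a + x ^ 2) ^ (-(1 : ℝ) / 2) := by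
  have hpos : 0 < a + x ^ 2 := by linarith [neg_abs_le a]
  have hroot : √(a + x ^ 2) ≤ √2 * x := by
    rw [Real.sqrt_le_iff, mul_pow, Real.sq_sqrt zero_le_two]
    exact ⟨by positivity, by linarith [le_abs_self a]⟩
  calc x⁻¹ = √2 * (√2 * x)⁻¹ := by field_simp
    _ ≤ √2 * (√(a + x ^ 2))⁻¹ := by gcongr
    _ = √2 * (a + x ^ 2) ^ (-(1 : ℝ) / 2) := by
      rw [Real.sqrt_eq_rpow (a + x ^ 2), ← Real.rpow_neg hpos.le, neg_div]

theorem not_integrable_add_sq_rpow_neg_half (a m : ℝ) :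
    ¬ Integrable (fun x : ℝ => (a + (x - m) ^ 2) ^ (-(1 : ℝ) / 2)) := by
  intro h
  have hcentered : Integrable (fun x : ℝ => (a + x ^ 2) ^ (-(1 : ℝ) / 2)) := by
    simpa using h.comp_add_right m
  refine not_integrableOn_Ioi_inv (a := √|a|) ?_
  refine ((hcentered.const_mul √2).integrableOn).mono' measurable_inv.aestronglyMeasurable ?_
  filter_upwards [ae_restrict_mem measurableSet_Ioi] with x hx
  have hx0 : 0 < x := (Real.sqrt_nonneg _).trans_lt hx
  rw [Real.norm_eq_abs, abs_inv, abs_of_pos hx0]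
  exact inv_le_sqrt_two_mul_add_sq_rpow hx0 (Real.lt_sq_of_sqrt_lt hx)

/-- For `a > 0` and integer `n ≥ 2`, the kernel `μ ↦ (a + n(μ − m)²)^(−n/2)` is
integrable over `ℝ` and is proportional to the density of the location-scale
t-distribution `t_{n−1}(m, a/(n(n−1)))`, whose density is proportional to
`(1 + (μ−m)²/((n−1)·ω²))^(−n/2)` with `ω² = a/(n(n−1))`. In contrast, for `n = 1`
the kernel `μ ↦ (a + (μ − m)²)^(−1/2)` is not integrable over `ℝ`. -/
theorem t_kernel_propriety (a : ℝ) (ha : 0 < a) (m : ℝ) (n : ℕ) (hn : 2 ≤ n) :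
    (Integrable (fun μ : ℝ => (a + n * (μ - m) ^ 2) ^ (-(n : ℝ) / 2)) volume ∧
      ∃ c > 0, ∀ μ : ℝ,
        (a + n * (μ - m) ^ 2) ^ (-(n : ℝ) / 2)
          = c * (1 + (μ - m) ^ 2 / (((n : ℝ) - 1) * (a / ((n : ℝ) * ((n : ℝ) - 1)))))
              ^ (-(n : ℝ) / 2)) ∧
    ¬ Integrable (fun μ : ℝ => (a + (μ - m) ^ 2) ^ (-(1 : ℝ) / 2)) volume := by
  have hn1 : (1 : ℝ) < n := by exact_mod_cast hn
  have hscale : ((n : ℝ) - 1) * (a / ((n : ℝ) * ((n : ℝ) - 1))) = a / n := by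
    field_simp [(sub_pos.2 hn1).ne']
  have hprop : ∀ μ : ℝ, (a + n * (μ - m) ^ 2) ^ (-(n : ℝ) / 2)
      = a ^ (-(n : ℝ) / 2) * (1 + (μ - m) ^ 2 / (((n : ℝ) - 1) * (a / ((n : ℝ) * ((n : ℝ) - 1)))))
          ^ (-(n : ℝ) / 2) := fun μ => by
    rw [hscale]
    exact add_mul_sq_rpow_eq ha (by linarith) _ _
  refine ⟨⟨?_, a ^ (-(n : ℝ) / 2), Real.rpow_pos_of_pos ha _, hprop⟩,
    not_integrable_add_sq_rpow_neg_half a m⟩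
  simp_rw [hprop, hscale]
  exact (integrable_one_add_sq_div_rpow m (by positivity) hn1).const_mul _
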